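/- arXiv:2209.11882 — 2 statements merged into one kernel-verified Lean document; each statement's English description precedes it below -/
import Mathlib

section
/- Let n, a, b be natural numbers with n ≥ a + b. If u and v are binary words of lengths n − a and n − b respectively with SCS(u,v) = n (equivalently, LCS(u,v) = n − a − b), then m_LCS(u,v) ≤ m_SCS(u,v) ≤ binomial(a+b, a). -/
/-!
If `c ≠ d`, a shortest common supersequence of `c :: u` and `d :: v` starts with `c` or `d` and
continues with a shortest common supersequence of `(u, d :: v)` resp. `(c :: u, v)`, while a
longest common subsequence misses one of the two first letters and is a longest common subsequence
of one of these two branches. Because `SCS + LCS = |u| + |v|`, the optimal branches are the same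
for both problems, so `m_LCS ≤ m_SCS` follows by induction; and the number of shortest common
supersequences obeys Pascal's rule in the excesses `a = SCS - |u|`, `b = SCS - |v|`, whence the
binomial bound.
-/

/-- Length of a longest common subsequence of two binary words. -/
noncomputable def LCSlen (u v : List Bool) : ℕ :=
  sSup {m : ℕ | ∃ w : List Bool, w.Sublist u ∧ w.Sublist v ∧ w.length = m}

/-- Length of a shortest common supersequence of two binary words. -/
noncomputable def SCSlen (u v : List Bool) : ℕ :=
  sInf {m : ℕ | ∃ w : List Bool, u.Sublist w ∧ v.Sublist w ∧ w.length = m}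

/-- Deletion distance between two words of equal length `n`: `n - LCS`. -/
noncomputable def delDist (u v : List Bool) : ℕ := u.length - LCSlen u v

/-- Number of distinct longest common subsequences. -/
noncomputable def mLCS (u v : List Bool) : ℕ :=
  Set.ncard {w : List Bool | w.Sublist u ∧ w.Sublist v ∧ w.length = LCSlen u v}

/-- Number of distinct shortest common supersequences. -/
noncomputable def mSCS (u v : List Bool) : ℕ :=
  Set.ncard {w : List Bool | u.Sublist w ∧ v.Sublist w ∧ w.length = SCSlen u v}

open List

theorem List.sublist_or_sublist_of_sublist_cons_cons {α : Type*} {c d : α} {u v w : List α}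
    (hcd : c ≠ d) (hu : w <+ c :: u) (hv : w <+ d :: v) : w <+ u ∨ w <+ v := by
  obtain _ | ⟨e, w⟩ := w
  · exact Or.inl (nil_sublist u)
  · by_cases hec : e = c
    · exact Or.inr (hv.of_cons_of_ne (hec ▸ hcd))
    · exact Or.inl (hu.of_cons_of_ne hec)

-- The one place where the alphabet being binary matters: the head of `w` must be `c` or `d`.
theorem exists_cons_of_cons_sublist_of_cons_sublist {c d : Bool} {u v w : List Bool}
    (hcd : c ≠ d) (hu : c :: u <+ w) (hv : d :: v <+ w) :
    ∃ w', (w = c :: w' ∧ u <+ w' ∧ d :: v <+ w') ∨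
      (w = d :: w' ∧ c :: u <+ w' ∧ v <+ w') := by
  obtain _ | ⟨e, w'⟩ := w
  · simp at hu
  · refine ⟨w', ?_⟩
    obtain rfl | rfl : e = c ∨ e = d := by cases c <;> cases d <;> cases e <;> simp_all
    · exact Or.inl ⟨rfl, hu.of_cons_cons, hv.of_cons_of_ne hcd.symm⟩
    · exact Or.inr ⟨rfl, hu.of_cons_of_ne hcd, hv.of_cons_cons⟩

theorem Nat.choose_add_le_choose_add {a b a' b' : ℕ} (ha : a' ≤ a) (hb : b' ≤ b) :
    (a' + b').choose a' ≤ (a + b).choose a :=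
  calc (a' + b').choose a' ≤ (a' + b).choose a' := Nat.choose_le_choose _ (by omega)
    _ = (a' + b).choose b := Nat.choose_symm_add
    _ ≤ (a + b).choose b := Nat.choose_le_choose _ (by omega)
    _ = (a + b).choose a := Nat.choose_symm_add.symm

theorem Set.ncard_ite_empty {α : Type*} (p : Prop) [Decidable p] (s : Set α) :
    (if p then s else ∅).ncard = if p then s.ncard else 0 := by
  split_ifs <;> simp

def LCSset (u v : List Bool) : Set (List Bool) :=
  {w | w <+ u ∧ w <+ v ∧ w.length = LCSlen u v}

def SCSset (u v : List Bool) : Set (List Bool) :=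
  {w | u <+ w ∧ v <+ w ∧ w.length = SCSlen u v}

theorem mLCS_eq_ncard (u v : List Bool) : mLCS u v = (LCSset u v).ncard := rfl

theorem mSCS_eq_ncard (u v : List Bool) : mSCS u v = (SCSset u v).ncard := rfl

section Lengths

variable {u v w : List Bool}

theorem bddAbove_LCS_lengths (u v : List Bool) :
    BddAbove {m | ∃ w : List Bool, w <+ u ∧ w <+ v ∧ w.length = m} :=
  ⟨u.length, fun _ ⟨_, hu, _, hw⟩ => hw ▸ hu.length_le⟩

theorem exists_LCS (u v : List Bool) : ∃ w, w <+ u ∧ w <+ v ∧ w.length = LCSlen u v :=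
  Nat.sSup_mem (s := {m | ∃ w : List Bool, w <+ u ∧ w <+ v ∧ w.length = m})
    ⟨0, [], nil_sublist u, nil_sublist v, rfl⟩ (bddAbove_LCS_lengths u v)

theorem length_le_LCSlen (hu : w <+ u) (hv : w <+ v) : w.length ≤ LCSlen u v :=
  le_csSup (bddAbove_LCS_lengths u v) ⟨w, hu, hv, rfl⟩

theorem exists_SCS (u v : List Bool) : ∃ w, u <+ w ∧ v <+ w ∧ w.length = SCSlen u v :=
  Nat.sInf_mem (s := {m | ∃ w : List Bool, u <+ w ∧ v <+ w ∧ w.length = m})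
    ⟨_, u ++ v, sublist_append_left u v, sublist_append_right u v, rfl⟩

theorem SCSlen_le_length (hu : u <+ w) (hv : v <+ w) : SCSlen u v ≤ w.length :=
  Nat.sInf_le ⟨w, hu, hv, rfl⟩

theorem length_le_SCSlen_left (u v : List Bool) : u.length ≤ SCSlen u v := by
  obtain ⟨w, hu, -, hw⟩ := exists_SCS u v
  exact hw ▸ hu.length_le

theorem length_le_SCSlen_right (u v : List Bool) : v.length ≤ SCSlen u v := by
  obtain ⟨w, -, hv, hw⟩ := exists_SCS u v
  exact hw ▸ hv.length_le

theorem LCSlen_nil_left (v : List Bool) : LCSlen [] v = 0 := by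
  obtain ⟨w, hu, -, hw⟩ := exists_LCS [] v
  rw [← hw, sublist_nil.mp hu, length_nil]

theorem LCSlen_nil_right (u : List Bool) : LCSlen u [] = 0 := by
  obtain ⟨w, -, hv, hw⟩ := exists_LCS u []
  rw [← hw, sublist_nil.mp hv, length_nil]

theorem SCSlen_nil_left (v : List Bool) : SCSlen [] v = v.length :=
  (SCSlen_le_length (nil_sublist v) (Sublist.refl v)).antisymm (length_le_SCSlen_right [] v)

theorem SCSlen_nil_right (u : List Bool) : SCSlen u [] = u.length :=
  (SCSlen_le_length (Sublist.refl u) (nil_sublist u)).antisymm (length_le_SCSlen_left u [])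

theorem LCSlen_mono {u' v' : List Bool} (hu : u' <+ u) (hv : v' <+ v) :
    LCSlen u' v' ≤ LCSlen u v := by
  obtain ⟨w, hwu, hwv, hw⟩ := exists_LCS u' v'
  exact hw ▸ length_le_LCSlen (hwu.trans hu) (hwv.trans hv)

theorem SCSlen_cons_left_le (c : Bool) (u v : List Bool) :
    SCSlen (c :: u) v ≤ SCSlen u v + 1 := by
  obtain ⟨w, hu, hv, hw⟩ := exists_SCS u v
  simpa [hw] using SCSlen_le_length (hu.cons_cons c) (hv.cons c)

theorem SCSlen_cons_right_le (d : Bool) (u v : List Bool) :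
    SCSlen u (d :: v) ≤ SCSlen u v + 1 := by
  obtain ⟨w, hu, hv, hw⟩ := exists_SCS u v
  simpa [hw] using SCSlen_le_length (hu.cons d) (hv.cons_cons d)

theorem LCSlen_cons_cons_self (c : Bool) (u v : List Bool) :
    LCSlen (c :: u) (c :: v) = LCSlen u v + 1 := by
  refine le_antisymm ?_ ?_
  · obtain ⟨_ | ⟨e, w⟩, hu, hv, hw⟩ := exists_LCS (c :: u) (c :: v)
    · simp [← hw]
    · rw [← hw]
      exact Nat.succ_le_succ (length_le_LCSlen hu.of_cons_cons hv.of_cons_cons)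
  · obtain ⟨w, hu, hv, hw⟩ := exists_LCS u v
    simpa [hw] using length_le_LCSlen (hu.cons_cons c) (hv.cons_cons c)

theorem SCSlen_cons_cons_self (c : Bool) (u v : List Bool) :
    SCSlen (c :: u) (c :: v) = SCSlen u v + 1 := by
  refine le_antisymm ?_ ?_
  · obtain ⟨w, hu, hv, hw⟩ := exists_SCS u v
    simpa [hw] using SCSlen_le_length (hu.cons_cons c) (hv.cons_cons c)
  · obtain ⟨_ | ⟨e, w⟩, hu, hv, hw⟩ := exists_SCS (c :: u) (c :: v)
    · simp at hu
    · rw [← hw]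
      exact Nat.succ_le_succ (SCSlen_le_length hu.of_cons_cons hv.of_cons_cons)

theorem LCSlen_cons_cons_of_ne {c d : Bool} (hcd : c ≠ d) :
    LCSlen (c :: u) (d :: v) = max (LCSlen u (d :: v)) (LCSlen (c :: u) v) := by
  refine le_antisymm ?_ (max_le (LCSlen_mono (sublist_cons_self c u) (Sublist.refl _))
    (LCSlen_mono (Sublist.refl _) (sublist_cons_self d v)))
  obtain ⟨w, hu, hv, hw⟩ := exists_LCS (c :: u) (d :: v)
  rw [← hw]
  rcases sublist_or_sublist_of_sublist_cons_cons hcd hu hv with hu' | hv'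
  · exact le_max_of_le_left (length_le_LCSlen hu' hv)
  · exact le_max_of_le_right (length_le_LCSlen hu hv')

theorem SCSlen_cons_cons_of_ne {c d : Bool} (hcd : c ≠ d) :
    SCSlen (c :: u) (d :: v) = min (SCSlen u (d :: v)) (SCSlen (c :: u) v) + 1 := by
  refine le_antisymm ?_ ?_
  · have := SCSlen_cons_left_le c u (d :: v)
    have := SCSlen_cons_right_le d (c :: u) v
    omega
  · obtain ⟨w, hu, hv, hw⟩ := exists_SCS (c :: u) (d :: v)
    obtain ⟨w', ⟨rfl, hu', hv'⟩ | ⟨rfl, hu', hv'⟩⟩ :=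
      exists_cons_of_cons_sublist_of_cons_sublist hcd hu hv
    · rw [← hw, length_cons]
      exact Nat.succ_le_succ (min_le_of_left_le (SCSlen_le_length hu' hv'))
    · rw [← hw, length_cons]
      exact Nat.succ_le_succ (min_le_of_right_le (SCSlen_le_length hu' hv'))

theorem SCSlen_add_LCSlen : ∀ u v : List Bool, SCSlen u v + LCSlen u v = u.length + v.length
  | [], v => by simp [SCSlen_nil_left, LCSlen_nil_left]
  | c :: u, [] => by simp [SCSlen_nil_right, LCSlen_nil_right]
  | c :: u, d :: v => by
    rcases eq_or_ne c d with rfl | hcd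
    · have := SCSlen_add_LCSlen u v
      simp only [SCSlen_cons_cons_self, LCSlen_cons_cons_self, length_cons]
      omega
    · have h₁ := SCSlen_add_LCSlen u (d :: v)
      have h₂ := SCSlen_add_LCSlen (c :: u) v
      simp only [SCSlen_cons_cons_of_ne hcd, LCSlen_cons_cons_of_ne hcd, length_cons]
        at h₁ h₂ ⊢
      omega
termination_by u v => u.length + v.length

end Lengths

section Sets

variable {c d : Bool} {u v : List Bool}

theorem LCSset_finite (u v : List Bool) : (LCSset u v).Finite :=
  (List.finite_length_eq Bool (LCSlen u v)).subset fun _ hw => hw.2.2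

theorem SCSset_finite (u v : List Bool) : (SCSset u v).Finite :=
  (List.finite_length_eq Bool (SCSlen u v)).subset fun _ hw => hw.2.2

theorem mLCS_nil_left (v : List Bool) : mLCS [] v = 1 := by
  rw [mLCS_eq_ncard, Set.ncard_eq_one]
  exact ⟨[], by ext w; simp +contextual [LCSset, LCSlen_nil_left]⟩

theorem mLCS_nil_right (u : List Bool) : mLCS u [] = 1 := by
  rw [mLCS_eq_ncard, Set.ncard_eq_one]
  exact ⟨[], by ext w; simp +contextual [LCSset, LCSlen_nil_right]⟩

theorem mSCS_nil_left (v : List Bool) : mSCS [] v = 1 := by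
  rw [mSCS_eq_ncard, Set.ncard_eq_one]
  refine ⟨v, Set.ext fun w => ⟨fun ⟨_, hv, hw⟩ => ?_, fun hw => ?_⟩⟩
  · exact (hv.eq_of_length (by rw [hw, SCSlen_nil_left])).symm
  · subst hw; exact ⟨nil_sublist w, Sublist.refl w, (SCSlen_nil_left w).symm⟩

theorem mSCS_nil_right (u : List Bool) : mSCS u [] = 1 := by
  rw [mSCS_eq_ncard, Set.ncard_eq_one]
  refine ⟨u, Set.ext fun w => ⟨fun ⟨hu, _, hw⟩ => ?_, fun hw => ?_⟩⟩
  · exact (hu.eq_of_length (by rw [hw, SCSlen_nil_right])).symm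
  · subst hw; exact ⟨Sublist.refl w, nil_sublist w, (SCSlen_nil_right w).symm⟩

theorem LCSset_cons_cons_self (c : Bool) (u v : List Bool) :
    LCSset (c :: u) (c :: v) = (c :: ·) '' LCSset u v := by
  ext w
  constructor
  · rintro ⟨hu, hv, hw⟩
    rw [LCSlen_cons_cons_self] at hw
    obtain _ | ⟨e, w⟩ := w
    · simp at hw
    obtain rfl : e = c := by
      by_contra hec
      have := length_le_LCSlen (hu.of_cons_of_ne hec) (hv.of_cons_of_ne hec)
      simp only [length_cons] at hw this
      omega
    exact ⟨w, ⟨hu.of_cons_cons, hv.of_cons_cons, by simpa using hw⟩, rfl⟩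
  · rintro ⟨w, ⟨hu, hv, hw⟩, rfl⟩
    exact ⟨hu.cons_cons c, hv.cons_cons c, by simp [LCSlen_cons_cons_self, hw]⟩

theorem SCSset_cons_cons_self (c : Bool) (u v : List Bool) :
    SCSset (c :: u) (c :: v) = (c :: ·) '' SCSset u v := by
  ext w
  constructor
  · rintro ⟨hu, hv, hw⟩
    rw [SCSlen_cons_cons_self] at hw
    obtain _ | ⟨e, w⟩ := w
    · simp at hu
    obtain rfl : e = c := by
      by_contra hec
      have := SCSlen_le_length (hu.of_cons_of_ne (Ne.symm hec)) (hv.of_cons_of_ne (Ne.symm hec))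
      simp only [length_cons, SCSlen_cons_cons_self] at hw this
      omega
    exact ⟨w, ⟨hu.of_cons_cons, hv.of_cons_cons, by simpa using hw⟩, rfl⟩
  · rintro ⟨w, ⟨hu, hv, hw⟩, rfl⟩
    exact ⟨hu.cons_cons c, hv.cons_cons c, by simp [SCSlen_cons_cons_self, hw]⟩

theorem LCSset_cons_cons_subset (hcd : c ≠ d) :
    LCSset (c :: u) (d :: v) ⊆
      (if LCSlen (c :: u) v ≤ LCSlen u (d :: v) then LCSset u (d :: v) else ∅) ∪
      (if LCSlen u (d :: v) ≤ LCSlen (c :: u) v then LCSset (c :: u) v else ∅) := by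
  rintro w ⟨hu, hv, hw⟩
  rw [LCSlen_cons_cons_of_ne hcd] at hw
  rcases sublist_or_sublist_of_sublist_cons_cons hcd hu hv with hu' | hv'
  · have := length_le_LCSlen hu' hv
    left
    rw [if_pos (by omega)]
    exact ⟨hu', hv, by omega⟩
  · have := length_le_LCSlen hu hv'
    right
    rw [if_pos (by omega)]
    exact ⟨hu, hv', by omega⟩

theorem SCSset_cons_cons_of_ne (hcd : c ≠ d) :
    SCSset (c :: u) (d :: v) =
      (if SCSlen u (d :: v) ≤ SCSlen (c :: u) v then (c :: ·) '' SCSset u (d :: v) else ∅) ∪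
      (if SCSlen (c :: u) v ≤ SCSlen u (d :: v) then (d :: ·) '' SCSset (c :: u) v
        else ∅) := by
  refine subset_antisymm ?_ (Set.union_subset ?_ ?_)
  · rintro w ⟨hu, hv, hw⟩
    rw [SCSlen_cons_cons_of_ne hcd] at hw
    obtain ⟨w, ⟨rfl, hu', hv'⟩ | ⟨rfl, hu', hv'⟩⟩ :=
      exists_cons_of_cons_sublist_of_cons_sublist hcd hu hv
    · have := SCSlen_le_length hu' hv'
      simp only [length_cons] at hw
      left
      rw [if_pos (by omega)]
      exact ⟨w, ⟨hu', hv', by omega⟩, rfl⟩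
    · have := SCSlen_le_length hu' hv'
      simp only [length_cons] at hw
      right
      rw [if_pos (by omega)]
      exact ⟨w, ⟨hu', hv', by omega⟩, rfl⟩
  · split_ifs with hle
    · rintro _ ⟨w, ⟨hu, hv, hw⟩, rfl⟩
      exact ⟨hu.cons_cons c, hv.cons c, by simp [SCSlen_cons_cons_of_ne hcd, hw, hle]⟩
    · exact Set.empty_subset _
  · split_ifs with hle
    · rintro _ ⟨w, ⟨hu, hv, hw⟩, rfl⟩
      exact ⟨hu.cons d, hv.cons_cons d, by simp [SCSlen_cons_cons_of_ne hcd, hw, hle]⟩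
    · exact Set.empty_subset _

theorem mLCS_cons_cons_self (c : Bool) (u v : List Bool) :
    mLCS (c :: u) (c :: v) = mLCS u v := by
  rw [mLCS_eq_ncard, LCSset_cons_cons_self, Set.ncard_image_of_injective _ cons_injective]
  rfl

theorem mSCS_cons_cons_self (c : Bool) (u v : List Bool) :
    mSCS (c :: u) (c :: v) = mSCS u v := by
  rw [mSCS_eq_ncard, SCSset_cons_cons_self, Set.ncard_image_of_injective _ cons_injective]
  rfl

theorem mLCS_cons_cons_le_of_ne (hcd : c ≠ d) :
    mLCS (c :: u) (d :: v) ≤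
      (if LCSlen (c :: u) v ≤ LCSlen u (d :: v) then mLCS u (d :: v) else 0) +
      (if LCSlen u (d :: v) ≤ LCSlen (c :: u) v then mLCS (c :: u) v else 0) := by
  simp only [mLCS_eq_ncard, ← Set.ncard_ite_empty]
  refine (Set.ncard_le_ncard (LCSset_cons_cons_subset hcd) ?_).trans (Set.ncard_union_le _ _)
  exact .union (by split_ifs <;> simp [LCSset_finite]) (by split_ifs <;> simp [LCSset_finite])

theorem mSCS_cons_cons_of_ne (hcd : c ≠ d) :
    mSCS (c :: u) (d :: v) =
      (if SCSlen u (d :: v) ≤ SCSlen (c :: u) v then mSCS u (d :: v) else 0) +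
      (if SCSlen (c :: u) v ≤ SCSlen u (d :: v) then mSCS (c :: u) v else 0) := by
  have hdisj : Disjoint ((c :: ·) '' SCSset u (d :: v)) ((d :: ·) '' SCSset (c :: u) v) := by
    rw [Set.disjoint_left]
    rintro _ ⟨w, -, rfl⟩ ⟨w', -, h⟩
    exact hcd (cons_eq_cons.mp h).1.symm
  simp only [mSCS_eq_ncard, SCSset_cons_cons_of_ne hcd]
  split_ifs <;> simp [Set.ncard_union_eq hdisj ((SCSset_finite _ _).image _)
    ((SCSset_finite _ _).image _), Set.ncard_image_of_injective _ cons_injective]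

end Sets

theorem mLCS_le_mSCS : ∀ u v : List Bool, mLCS u v ≤ mSCS u v
  | [], v => by rw [mLCS_nil_left, mSCS_nil_left]
  | c :: u, [] => by rw [mLCS_nil_right, mSCS_nil_right]
  | c :: u, d :: v => by
    rcases eq_or_ne c d with rfl | hcd
    · rw [mLCS_cons_cons_self, mSCS_cons_cons_self]
      exact mLCS_le_mSCS u v
    · have ih₁ := mLCS_le_mSCS u (d :: v)
      have ih₂ := mLCS_le_mSCS (c :: u) v
      have h := mLCS_cons_cons_le_of_ne (u := u) (v := v) hcd
      -- The two branches have equal `length + length`, so by `SCSlen_add_LCSlen` a branch is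
      -- optimal for the LCS iff it is optimal for the SCS.
      have e₁ := SCSlen_add_LCSlen u (d :: v)
      have e₂ := SCSlen_add_LCSlen (c :: u) v
      simp only [length_cons] at e₁ e₂
      rw [mSCS_cons_cons_of_ne hcd]
      split_ifs at h ⊢ <;> omega
termination_by u v => u.length + v.length

theorem mSCS_le_choose : ∀ (u v : List Bool) (a b : ℕ),
    SCSlen u v = u.length + a → SCSlen u v = v.length + b → mSCS u v ≤ (a + b).choose a
  | [], v, a, b, _, _ => by
    rw [mSCS_nil_left]
    exact Nat.choose_pos (Nat.le_add_right a b)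
  | c :: u, [], a, b, _, _ => by
    rw [mSCS_nil_right]
    exact Nat.choose_pos (Nat.le_add_right a b)
  | c :: u, d :: v, a, b, ha, hb => by
    rcases eq_or_ne c d with rfl | hcd
    · rw [mSCS_cons_cons_self]
      simp only [SCSlen_cons_cons_self, length_cons] at ha hb
      exact mSCS_le_choose u v a b (by omega) (by omega)
    · rw [mSCS_cons_cons_of_ne hcd]
      rw [SCSlen_cons_cons_of_ne hcd] at ha hb
      have hu := length_le_SCSlen_left (c :: u) v
      have hv := length_le_SCSlen_right u (d :: v)
      simp only [length_cons] at ha hb hu hv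
      split_ifs
      · obtain ⟨a, rfl⟩ : ∃ a', a = a' + 1 := ⟨a - 1, by omega⟩
        obtain ⟨b, rfl⟩ : ∃ b', b = b' + 1 := ⟨b - 1, by omega⟩
        have ih₁ := mSCS_le_choose u (d :: v) (a + 1) b (by omega) (by simp; omega)
        have ih₂ := mSCS_le_choose (c :: u) v a (b + 1) (by simp; omega) (by omega)
        rw [show a + 1 + (b + 1) = a + (b + 1) + 1 by omega, Nat.choose_succ_succ']
        rw [show a + 1 + b = a + (b + 1) by omega] at ih₁
        omega
      · have ih := mSCS_le_choose u (d :: v) a (b - 1) (by omega) (by simp; omega)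
        simpa using ih.trans (Nat.choose_add_le_choose_add le_rfl (Nat.sub_le b 1))
      · have ih := mSCS_le_choose (c :: u) v (a - 1) b (by simp; omega) (by omega)
        simpa using ih.trans (Nat.choose_add_le_choose_add (Nat.sub_le a 1) le_rfl)
      · omega
termination_by u v => u.length + v.length

theorem stmt2_general (n a b : ℕ) (u v : List Bool)
    (hu : u.length = n - a) (hv : v.length = n - b) (hscs : SCSlen u v = n) :
    mLCS u v ≤ mSCS u v ∧ mSCS u v ≤ (a + b).choose a := by
  refine ⟨mLCS_le_mSCS u v, ?_⟩
  calc mSCS u v ≤ (n - u.length + (n - v.length)).choose (n - u.length) :=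
        mSCS_le_choose u v _ _ (by omega) (by omega)
    _ ≤ (a + b).choose a := Nat.choose_add_le_choose_add (by omega) (by omega)

theorem stmt2 (n a b : ℕ) (hn : a + b ≤ n) (u v : List Bool)
    (hu : u.length = n - a) (hv : v.length = n - b) (hscs : SCSlen u v = n) :
    mLCS u v ≤ mSCS u v ∧ mSCS u v ≤ (a + b).choose a :=
  stmt2_general n a b u v hu hv hscs
end

section
/- Define m(a,b) := m_LCS((10)^⟨a⟩, (0110)^⟨b⟩). For all integers a, b ≥ 0 with b even and b/2 ≤ a ≤ 3b/2: if 2a ≡ b (mod 4), then m(a,b) = binomial(b/2, (2a − b)/4), and if 2a ≡ b + 2 (mod 4), then m(a,b) = binomial(b/2 + 1, (2a − b + 2)/4). -/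
/-- `repPrefix x m` is the prefix of length `m` of the infinite periodic word `xxx⋯`. -/
def repPrefix (x : List Bool) (m : ℕ) : List Bool :=
  (List.flatten (List.replicate m x)).take m

/-!
A word `w` is a subsequence of `(10)^⟨a⟩` iff its greedy embedding cost `altCost true w` is at
most `a`, and of `(0110)^⟨b⟩` iff its greedy cost `phaseCost 0 w` is at most `b`. Per letter the
first cost grows by 1 or 2 and the second by 1 to 3, and a bounded potential shows
`4 |w| ≤ 2 altCost + phaseCost`; hence `LCS ≤ (2a + b) / 4`. A common subsequence that is long
up to a slack of `2` cannot read two consecutive letters that are both expensive, which forces it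
to be a concatenation of blocks `x` and `(!x) x` whose main letter `x` alternates, plus possibly
one final letter. The lengths and costs of such block words are explicit, so the longest common
subsequences are counted by binomial coefficients (twice Pascal's rule in the second case).
-/

open scoped List

theorem take_flatten_replicate_of_le {x : List Bool} (hx : x ≠ []) {m k : ℕ} (h : m ≤ k) :
    ((List.replicate k x).flatten).take m = repPrefix x m := by
  obtain ⟨t, rfl⟩ := Nat.exists_eq_add_of_le h
  have hlen : m ≤ (List.replicate m x).flatten.length := by
    simpa using Nat.le_mul_of_pos_right m (List.length_pos_iff.mpr hx)
  rw [List.replicate_add, List.flatten_append, List.take_append_of_le_length hlen]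
  rfl

theorem repPrefix_add_length {x : List Bool} (hx : x ≠ []) (m : ℕ) :
    repPrefix x (m + x.length) = x ++ repPrefix x m := by
  have hx' := List.length_pos_iff.mpr hx
  obtain ⟨k, hk⟩ : ∃ k, m + x.length = k + 1 := ⟨m + x.length - 1, by omega⟩
  rw [repPrefix, hk, List.replicate_succ, List.flatten_cons, ← hk, List.take_append,
    List.take_of_length_le (by omega), Nat.add_sub_cancel,
    take_flatten_replicate_of_le hx (by omega)]

def orbitWord {σ : Type*} (next : σ → σ) (head : σ → Bool) : σ → ℕ → List Bool
  | _, 0 => []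
  | q, m + 1 => head q :: orbitWord next head (next q) m

section Greedy

variable {σ : Type*} {next : σ → σ} {head : σ → Bool} {cost : σ → List Bool → ℕ}

theorem sublist_orbitWord_iff (cost_nil : ∀ q, cost q [] = 0)
    (cost_le : ∀ q w, cost q w ≤ cost (next q) w + 1)
    (cost_head : ∀ q w, cost q (head q :: w) = cost (next q) w + 1)
    (cost_skip : ∀ q c w, c ≠ head q → cost q (c :: w) = cost (next q) (c :: w) + 1)
    (m : ℕ) (q : σ) (w : List Bool) :
    w <+ orbitWord next head q m ↔ cost q w ≤ m := by
  have cost_cons_pos : ∀ q c w, 0 < cost q (c :: w) := by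
    intro q c w
    by_cases hc : c = head q
    · rw [hc, cost_head]; omega
    · rw [cost_skip q c w hc]; omega
  induction m generalizing q w with
  | zero =>
    cases w with
    | nil => simp [cost_nil]
    | cons c w => simpa [orbitWord] using (cost_cons_pos q c w).ne'
  | succ m ih =>
    rw [orbitWord, List.sublist_cons_iff]
    constructor
    · rintro (h | ⟨r, rfl, hr⟩)
      · have := cost_le q w
        have := (ih (next q) w).mp h
        omega
      · rw [cost_head]
        exact Nat.add_le_add_right ((ih (next q) r).mp hr) 1
    · intro h
      cases w with
      | nil => exact Or.inl (List.nil_sublist _)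
      | cons c w =>
        by_cases hc : c = head q
        · subst hc
          rw [cost_head] at h
          exact Or.inr ⟨w, rfl, (ih (next q) w).mpr (by omega)⟩
        · rw [cost_skip q c w hc] at h
          exact Or.inl ((ih (next q) _).mpr (by omega))

end Greedy

abbrev altWord : Bool → ℕ → List Bool := orbitWord not id

def altCost : Bool → List Bool → ℕ
  | _, [] => 0
  | s, c :: w => (if c = s then 1 else 2) + altCost (!c) w

theorem sublist_altWord_iff (m : ℕ) (s : Bool) (w : List Bool) :
    w <+ altWord s m ↔ altCost s w ≤ m :=
  sublist_orbitWord_iff (fun _ => rfl)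
    (fun s w => by cases w with
      | nil => simp [altCost]
      | cons c w => cases c <;> cases s <;> simp [altCost] <;> omega)
    (fun s w => by cases s <;> simp [altCost] <;> omega)
    (fun s c w hc => by cases c <;> cases s <;> simp_all [altCost] <;> omega) m s w

theorem repPrefix_true_false (a : ℕ) : repPrefix [true, false] a = altWord true a := by
  induction a using Nat.twoStepInduction with
  | zero => rfl
  | one => rfl
  | more a ih _ =>
    rw [show a + 2 = a + [true, false].length from rfl, repPrefix_add_length (by simp), ih]
    rfl

/-- The bit at phase `p` of the periodic word `0110 0110 ⋯`. -/
def phaseBit (p : Fin 4) : Bool := p == 1 || p == 2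

abbrev phaseWord : Fin 4 → ℕ → List Bool := orbitWord (· + 1) phaseBit

/-- Number of letters of `0110 0110 ⋯`, read from phase `p`, up to and including the
next occurrence of `c`. -/
def phaseGap : Fin 4 → Bool → Fin 4
  | 0, false => 1 | 0, true => 2
  | 1, false => 3 | 1, true => 1
  | 2, false => 2 | 2, true => 1
  | 3, false => 1 | 3, true => 3

def phaseCost : Fin 4 → List Bool → ℕ
  | _, [] => 0
  | p, c :: w => (phaseGap p c : ℕ) + phaseCost (p + phaseGap p c) w

theorem phaseCost_le_succ_add_one (p : Fin 4) (w : List Bool) :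
    phaseCost p w ≤ phaseCost (p + 1) w + 1 := by
  induction w generalizing p with
  | nil => simp [phaseCost]
  | cons c w ih =>
    have := ih 0; have := ih 1; have := ih 2; have := ih 3
    fin_cases p <;> cases c <;> simp [phaseCost, phaseGap] at * <;> omega

theorem sublist_phaseWord_iff (m : ℕ) (p : Fin 4) (w : List Bool) :
    w <+ phaseWord p m ↔ phaseCost p w ≤ m :=
  sublist_orbitWord_iff (fun _ => rfl) phaseCost_le_succ_add_one
    (fun p w => by fin_cases p <;> simp [phaseCost, phaseGap, phaseBit] <;> omega)
    (fun p c w hc => by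
      fin_cases p <;> cases c <;> simp_all [phaseCost, phaseGap, phaseBit] <;> omega)
    m p w

theorem repPrefix_false_true_true_false (b : ℕ) :
    repPrefix [false, true, true, false] b = phaseWord 0 b := by
  induction b using Nat.strong_induction_on with
  | _ b ih =>
    match b, ih with
    | 0, _ | 1, _ | 2, _ | 3, _ => rfl
    | b + 4, ih =>
      rw [show b + 4 = b + [false, true, true, false].length from rfl,
        repPrefix_add_length (by simp), ih b (by omega)]
      rfl

/-- Correction term making `2 * altCost + phaseCost` an amortised upper bound on `4 * length`. -/
def phaseSlack : Bool → Fin 4 → ℕ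
  | true, 0 => 0 | true, 1 => 1 | true, 2 => 2 | true, 3 => 0
  | false, 0 => 2 | false, 1 => 0 | false, 2 => 0 | false, 3 => 1

theorem four_mul_length_le_altCost_add_phaseCost (w : List Bool) (s : Bool) (p : Fin 4) :
    4 * w.length ≤ 2 * altCost s w + phaseCost p w + phaseSlack s p := by
  induction w generalizing s p with
  | nil => simp [altCost, phaseCost]
  | cons c w ih =>
    have := ih (!c) (p + phaseGap p c)
    fin_cases p <;> cases s <;> cases c <;>
      simp [altCost, phaseCost, phaseGap, phaseSlack] at this ⊢ <;> omega

/-- The concatenation of blocks `x` (for `false`) and `!x x` (for `true`) read off `ℓ`, the main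
letter alternating from block to block, followed by a single `!x` when `d`. -/
def blockWord : Bool → List Bool → Bool → List Bool
  | _, [], false => []
  | x, [], true => [!x]
  | x, false :: ℓ, d => x :: blockWord (!x) ℓ d
  | x, true :: ℓ, d => (!x) :: x :: blockWord (!x) ℓ d

/-- The phase of `0110 0110 ⋯` at which `!x x` comes next. -/
def blockPhase (x : Bool) : Fin 4 := if x then 0 else 2

theorem length_blockWord (x : Bool) (ℓ : List Bool) (d : Bool) :
    (blockWord x ℓ d).length = ℓ.length + ℓ.count true + d.toNat := by
  induction ℓ generalizing x with
  | nil => cases d <;> rfl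
  | cons g ℓ ih => cases g <;> simp [blockWord, ih] <;> omega

theorem altCost_blockWord (x : Bool) (ℓ : List Bool) (d : Bool) :
    altCost x (blockWord x ℓ d) = ℓ.length + 2 * ℓ.count true + 2 * d.toNat := by
  induction ℓ generalizing x with
  | nil => cases d <;> cases x <;> rfl
  | cons g ℓ ih => cases g <;> cases x <;> simp [blockWord, altCost, ih] <;> omega

theorem phaseCost_blockWord (x : Bool) (ℓ : List Bool) (d : Bool) :
    phaseCost (blockPhase x) (blockWord x ℓ d) = 2 * ℓ.length + d.toNat := by
  induction ℓ generalizing x with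
  | nil => cases d <;> cases x <;> rfl
  | cons g ℓ ih =>
    have := ih (!x)
    cases g <;> cases x <;> simp [blockWord, phaseCost, phaseGap, blockPhase] at this ⊢ <;> omega

theorem blockWord_injective (x : Bool) :
    Function.Injective (fun p : List Bool × Bool => blockWord x p.1 p.2) := by
  suffices h : ∀ ℓ ℓ' x d d', blockWord x ℓ d = blockWord x ℓ' d' → ℓ = ℓ' ∧ d = d' by
    rintro ⟨ℓ, d⟩ ⟨ℓ', d'⟩ he
    obtain ⟨rfl, rfl⟩ := h ℓ ℓ' x d d' he
    rfl
  intro ℓ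
  induction ℓ with
  | nil =>
    intro ℓ' x d d' h
    cases ℓ' with
    | nil => cases d <;> cases d' <;> simp_all [blockWord]
    | cons g ℓ' => cases g <;> cases d <;> cases d' <;> cases x <;> simp [blockWord] at h
  | cons g ℓ ih =>
    intro ℓ' x d d' h
    cases ℓ' with
    | nil => cases g <;> cases d <;> cases d' <;> cases x <;> simp [blockWord] at h
    | cons g' ℓ' =>
      cases g <;> cases g' <;> cases x <;> simp [blockWord] at h <;>
        simpa using ih ℓ' _ d d' h

/-- Two consecutive letters `!x` would cost `4` in both words, which the amortised bound does not
allow. -/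
theorem exists_eq_blockWord :
    ∀ (x : Bool) (w : List Bool) (a b : ℕ), altCost x w ≤ a → phaseCost (blockPhase x) w ≤ b →
      2 * a + b ≤ 4 * w.length + 2 → ∃ ℓ d, w = blockWord x ℓ d
  | _, [], _, _, _, _, _ => ⟨[], false, rfl⟩
  | x, c :: w, a, b, ha, hb, hab => by
    by_cases hc : c = x
    · subst hc
      have hcost : altCost c (c :: w) = altCost (!c) w + 1 ∧
          phaseCost (blockPhase c) (c :: w) = phaseCost (blockPhase (!c)) w + 2 := by
        cases c <;> simp [altCost, phaseCost, phaseGap, blockPhase] <;> omega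
      obtain ⟨ℓ, d, rfl⟩ := exists_eq_blockWord (!c) w (a - 1) (b - 2) (by omega) (by omega)
        (by simp at hab; omega)
      exact ⟨false :: ℓ, d, rfl⟩
    obtain rfl : c = !x := by cases c <;> cases x <;> simp_all
    match w, ha, hb, hab with
    | [], _, _, _ => exact ⟨[], true, rfl⟩
    | c' :: w, ha, hb, hab =>
      by_cases hc' : c' = x
      · subst hc'
        have hcost : altCost c' ((!c') :: c' :: w) = altCost (!c') w + 3 ∧
            phaseCost (blockPhase c') ((!c') :: c' :: w) = phaseCost (blockPhase (!c')) w + 2 := by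
          cases c' <;> simp [altCost, phaseCost, phaseGap, blockPhase] <;> omega
        obtain ⟨ℓ, d, rfl⟩ := exists_eq_blockWord (!c') w (a - 3) (b - 2) (by omega) (by omega)
          (by simp at hab; omega)
        exact ⟨true :: ℓ, d, rfl⟩
      · obtain rfl : c' = !x := by cases c' <;> cases x <;> simp_all
        have hcost : altCost x ((!x) :: (!x) :: w) = altCost x w + 4 ∧
            phaseCost (blockPhase x) ((!x) :: (!x) :: w) = phaseCost (blockPhase x) w + 4 ∧
            phaseSlack x (blockPhase x) = 0 := by
          cases x <;> simp [altCost, phaseCost, phaseGap, blockPhase, phaseSlack] <;> omega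
        have := four_mul_length_le_altCost_add_phaseCost w x (blockPhase x)
        simp at hab
        omega

theorem LCSlen_eq {u v : List Bool} {L : ℕ} (hex : ∃ w, w <+ u ∧ w <+ v ∧ w.length = L)
    (hle : ∀ w, w <+ u → w <+ v → w.length ≤ L) : LCSlen u v = L :=
  IsGreatest.csSup_eq ⟨hex, by rintro _ ⟨w, hu, hv, rfl⟩; exact hle w hu hv⟩

/-- The parameters `(ℓ, d)` for which `blockWord true ℓ d` is a common subsequence of
`altWord true a` and `phaseWord 0 b` of length `L`. -/
def blockParams (a b L : ℕ) : Set (List Bool × Bool) :=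
  {p | p.1.length + 2 * p.1.count true + 2 * p.2.toNat ≤ a ∧ 2 * p.1.length + p.2.toNat ≤ b ∧
    p.1.length + p.1.count true + p.2.toNat = L}

theorem mLCS_altWord_phaseWord {a b L : ℕ} (hL : 2 * a + b ≤ 4 * L + 2)
    (hne : (blockParams a b L).Nonempty) :
    mLCS (altWord true a) (phaseWord 0 b) = (blockParams a b L).ncard := by
  have common_iff : ∀ w, (w <+ altWord true a ∧ w <+ phaseWord 0 b) ↔
      (altCost true w ≤ a ∧ phaseCost 0 w ≤ b) := fun w => by
    rw [sublist_altWord_iff, sublist_phaseWord_iff]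
  have length_le : ∀ w, w <+ altWord true a → w <+ phaseWord 0 b → w.length ≤ L := by
    intro w hu hv
    have := (common_iff w).mp ⟨hu, hv⟩
    have := four_mul_length_le_altCost_add_phaseCost w true 0
    simp only [phaseSlack] at this
    omega
  have mem_blockParams : ∀ ℓ d, (ℓ, d) ∈ blockParams a b L ↔
      (blockWord true ℓ d <+ altWord true a ∧ blockWord true ℓ d <+ phaseWord 0 b) ∧
        (blockWord true ℓ d).length = L := fun ℓ d => by
    rw [common_iff, altCost_blockWord, show (0 : Fin 4) = blockPhase true from rfl,
      phaseCost_blockWord, length_blockWord]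
    simp [blockParams, and_assoc]
  obtain ⟨⟨ℓ, d⟩, hℓd⟩ := hne
  have hLCS : LCSlen (altWord true a) (phaseWord 0 b) = L := by
    obtain ⟨⟨hu, hv⟩, hlen⟩ := (mem_blockParams ℓ d).mp hℓd
    exact LCSlen_eq ⟨_, hu, hv, hlen⟩ length_le
  have hset : {w | w <+ altWord true a ∧ w <+ phaseWord 0 b ∧ w.length = L} =
      (fun p : List Bool × Bool => blockWord true p.1 p.2) '' blockParams a b L := by
    ext w
    constructor
    · rintro ⟨hu, hv, hlen⟩
      obtain ⟨ha, hb⟩ := (common_iff w).mp ⟨hu, hv⟩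
      obtain ⟨ℓ, d, rfl⟩ := exists_eq_blockWord true w a b ha hb (by omega)
      exact ⟨(ℓ, d), (mem_blockParams ℓ d).mpr ⟨⟨hu, hv⟩, hlen⟩, rfl⟩
    · rintro ⟨⟨ℓ, d⟩, h, rfl⟩
      obtain ⟨⟨hu, hv⟩, hlen⟩ := (mem_blockParams ℓ d).mp h
      exact ⟨hu, hv, hlen⟩
  rw [mLCS, hLCS, hset, Set.ncard_image_of_injective _ (blockWord_injective true)]

def wordsOfWeight (m k : ℕ) : Set (List Bool) := {ℓ | ℓ.length = m ∧ ℓ.count true = k}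

instance (m k : ℕ) : Finite (wordsOfWeight m k) :=
  ((List.finite_length_eq Bool m).subset fun _ h => h.1).to_subtype

theorem wordsOfWeight_nonempty {m k : ℕ} (h : k ≤ m) : (wordsOfWeight m k).Nonempty :=
  ⟨List.replicate k true ++ List.replicate (m - k) false, by
    simp [wordsOfWeight, List.count_replicate]; omega⟩

theorem ncard_wordsOfWeight (m k : ℕ) : (wordsOfWeight m k).ncard = m.choose k := by
  induction m generalizing k with
  | zero =>
    cases k with
    | zero =>
      have : wordsOfWeight 0 0 = {[]} := by ext ℓ; simp [wordsOfWeight]; grind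
      simp [this]
    | succ k =>
      have : wordsOfWeight 0 (k + 1) = ∅ := by ext ℓ; simp [wordsOfWeight]; grind
      simp [this]
  | succ m ih =>
    cases k with
    | zero =>
      have : wordsOfWeight (m + 1) 0 = List.cons false '' wordsOfWeight m 0 := by
        ext ℓ
        cases ℓ with
        | nil => simp [wordsOfWeight]
        | cons c t => cases c <;> simp [wordsOfWeight]
      rw [this, Set.ncard_image_of_injective _ (List.cons_injective), ih]
      simp
    | succ k =>
      have : wordsOfWeight (m + 1) (k + 1) =
          List.cons false '' wordsOfWeight m (k + 1) ∪ List.cons true '' wordsOfWeight m k := by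
        ext ℓ
        cases ℓ with
        | nil => simp [wordsOfWeight]
        | cons c t => cases c <;> simp [wordsOfWeight]
      rw [this, Set.ncard_union_eq, Set.ncard_image_of_injective _ (List.cons_injective),
        Set.ncard_image_of_injective _ (List.cons_injective), ih, ih, Nat.choose_succ_succ',
        add_comm]
      simp [Set.disjoint_left]

theorem blockParams_same_parity (n j : ℕ) :
    blockParams (n + 2 * j) (2 * n) (n + j) = (·, false) '' wordsOfWeight n j := by
  ext ⟨ℓ, d⟩
  cases d <;> simp [blockParams, wordsOfWeight] <;> omega

theorem blockParams_opposite_parity (m j : ℕ) :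
    blockParams (m + 2 * j + 2) (2 * m + 2) (m + j + 1) =
      (·, false) '' (wordsOfWeight (m + 1) j ∪ wordsOfWeight m (j + 1)) ∪
        (·, true) '' wordsOfWeight m j := by
  ext ⟨ℓ, d⟩
  cases d <;> simp [blockParams, wordsOfWeight] <;> omega

theorem mLCS_altWord_phaseWord_same_parity {n j : ℕ} (h : j ≤ n) :
    mLCS (altWord true (n + 2 * j)) (phaseWord 0 (2 * n)) = n.choose j := by
  have hne : (blockParams (n + 2 * j) (2 * n) (n + j)).Nonempty := by
    rw [blockParams_same_parity]
    exact (wordsOfWeight_nonempty h).image _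
  rw [mLCS_altWord_phaseWord (by omega) hne, blockParams_same_parity,
    Set.ncard_image_of_injective _ (Prod.mk_left_injective false), ncard_wordsOfWeight]

theorem mLCS_altWord_phaseWord_opposite_parity {m j : ℕ} (h : j ≤ m) :
    mLCS (altWord true (m + 2 * j + 2)) (phaseWord 0 (2 * m + 2)) = (m + 2).choose (j + 1) := by
  have hne : (blockParams (m + 2 * j + 2) (2 * m + 2) (m + j + 1)).Nonempty := by
    rw [blockParams_opposite_parity]
    exact ((wordsOfWeight_nonempty h).image _).inr
  rw [mLCS_altWord_phaseWord (by omega) hne, blockParams_opposite_parity,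
    Set.ncard_union_eq, Set.ncard_image_of_injective _ (Prod.mk_left_injective false),
    Set.ncard_image_of_injective _ (Prod.mk_left_injective true), Set.ncard_union_eq,
    ncard_wordsOfWeight, ncard_wordsOfWeight, ncard_wordsOfWeight, Nat.choose_succ_succ' (m + 1),
    Nat.choose_succ_succ' m]
  · omega
  · exact Set.disjoint_left.mpr fun ℓ hℓ hℓ' => by simp [wordsOfWeight] at hℓ hℓ'; omega
  · simp [Set.disjoint_left]

theorem stmt13 (a b : ℕ) (hb : Even b) (h1 : b / 2 ≤ a) (h2 : a ≤ 3 * b / 2) :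
    (2 * a % 4 = b % 4 →
      mLCS (repPrefix [true, false] a) (repPrefix [false, true, true, false] b)
        = (b / 2).choose ((2 * a - b) / 4)) ∧
    (2 * a % 4 = (b + 2) % 4 →
      mLCS (repPrefix [true, false] a) (repPrefix [false, true, true, false] b)
        = (b / 2 + 1).choose ((2 * a - b + 2) / 4)) := by
  obtain ⟨n, rfl⟩ := hb
  rw [repPrefix_true_false, repPrefix_false_true_true_false]
  refine ⟨fun h => ?_, fun h => ?_⟩
  · obtain ⟨j, rfl⟩ : ∃ j, a = n + 2 * j := ⟨(a - n) / 2, by omega⟩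
    rw [show n + n = 2 * n by omega, mLCS_altWord_phaseWord_same_parity (by omega)]
    congr 1 <;> omega
  · obtain ⟨m, rfl⟩ : ∃ m, n = m + 1 := ⟨n - 1, by omega⟩
    obtain ⟨j, rfl⟩ : ∃ j, a = m + 2 * j + 2 := ⟨(a - m - 2) / 2, by omega⟩
    rw [show m + 1 + (m + 1) = 2 * m + 2 by omega,
      mLCS_altWord_phaseWord_opposite_parity (by omega)]
    congr 1 <;> omega
end
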